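/- For b ∈ {0,1}, let φ_b = (1/√2)(e_b⊗e_b + e₂⊗e₂) ∈ ℂ³⊗ℂ³ (realized in ℂ⁹ via the Kronecker product, where e₀, e₁, e₂ is the standard basis of ℂ³), and for x₀, x₁ ∈ {0,1} let U_{x₀,x₁} be the diagonal 3×3 matrix with diagonal entries ((−1)^{x₀}, (−1)^{x₁}, 1). Then (I₃ ⊗ U_{x₀,x₁}) · φ_b = (1/√2)((−1)^{x_b} e_b⊗e_b + e₂⊗e₂) where x_b = x₁ if b = 1 and x_b = x₀ if b = 0, and the inner product ⟪φ_b, (I₃ ⊗ U_{x₀,x₁}) · φ_b⟫ equals 1 if x_b = 0 and equals 0 if x_b = 1. Hence the measurement {Π₀ = |φ_b⟩⟨φ_b|, Π₁ = I − Π₀} yields outcome Π₀ with certainty when x_b = 0 and outcome Π₁ with certainty when x_b = 1. -/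

import Mathlib

/-!
`φ_b` is the sum of the two orthogonal basis vectors `e_(b,b)` and `e_(2,2)` of `ℂ³ ⊗ ℂ³`,
and `I ⊗ U` is diagonal, with eigenvalue `(-1)^{x_b}` on the first and `1` on the second.
Hence `(I ⊗ U) φ_b = (1/√2)((-1)^{x_b} e_(b,b) + e_(2,2))` and
`⟪φ_b, (I ⊗ U) φ_b⟫ = ((-1)^{x_b} + 1) / 2`.
-/

open Matrix Kronecker

section

variable {ι κ R : Type*} [DecidableEq ι] [DecidableEq κ]

theorem Pi.single_apply_fst_mul_single_apply_snd [MulZeroClass R] (i : ι) (j : κ) (x y : R)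
    (p : ι × κ) :
    (Pi.single i x : ι → R) p.1 * (Pi.single j y : κ → R) p.2 =
      (Pi.single (i, j) (x * y) : ι × κ → R) p := by
  obtain ⟨a, c⟩ := p
  by_cases ha : a = i <;> by_cases hc : c = j <;> simp [ha, hc]

theorem Matrix.one_kronecker_diagonal_mulVec_single [Fintype ι] [Fintype κ] [CommSemiring R]
    (d : κ → R) (i : ι) (j : κ) (x : R) :
    ((1 : Matrix ι ι R) ⊗ₖ diagonal d) *ᵥ Pi.single (i, j) x =
      Pi.single (i, j) (d j * x) := by
  rw [← diagonal_one, diagonal_kronecker_diagonal, diagonal_mulVec_single, one_mul]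

theorem sum_star_smul_single_add_single_mul [Fintype ι] [CommSemiring R] [StarRing R]
    {i j : ι} (hij : i ≠ j) (c s : R) :
    ∑ p, star ((c • (Pi.single i 1 + Pi.single j 1) : ι → R) p) *
        (c • (Pi.single i s + Pi.single j 1) : ι → R) p = star c * c * (s + 1) := by
  simp [Pi.single_apply, Finset.sum_add_distrib, add_mul, mul_add, mul_assoc, hij, hij.symm]

end

theorem neg_one_pow_fin_two_add_one_div_two (x : Fin 2) :
    ((-1 : ℂ) ^ (x : ℕ) + 1) / 2 = if x = 0 then 1 else 0 := by
  fin_cases x <;> norm_num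

theorem star_one_div_sqrt_two_mul_self :
    star (1 / Real.sqrt 2 : ℂ) * (1 / Real.sqrt 2) = 1 / 2 := by
  have h : ((Real.sqrt 2 : ℝ) : ℂ) ^ 2 = 2 := by norm_cast; simp
  simp [Complex.conj_ofReal, ← sq, h]

/-- Correctness of the Random-OT protocol of Section 2: applying Alice's phase
unitary `U_{x₀,x₁}` to the second qutrit of `φ_b = (1/√2)(|bb⟩ + |22⟩)` yields
`(1/√2)((−1)^{x_b}|bb⟩ + |22⟩)`, and the overlap `⟪φ_b, (I ⊗ U) φ_b⟫` is `1` when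
`x_b = 0` and `0` when `x_b = 1`, so Bob's measurement `{|φ_b⟩⟨φ_b|, I − |φ_b⟩⟨φ_b|}`
reveals `x_b` with certainty. -/
theorem qutrit_protocol_correct
    (b : Fin 3) (hb : b = 0 ∨ b = 1)
    (e : Fin 3 → Fin 3 → ℂ) (he : ∀ d i, e d i = if i = d then 1 else 0)
    (φ : Fin 3 × Fin 3 → ℂ)
    (hφ : φ = (1 / Real.sqrt 2 : ℂ) • fun p => e b p.1 * e b p.2 + e 2 p.1 * e 2 p.2)
    (x₀ x₁ : Fin 2)
    (U : Matrix (Fin 3) (Fin 3) ℂ)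
    (hU : U = Matrix.diagonal
      (fun i : Fin 3 => if i = 0 then (-1 : ℂ) ^ (x₀ : ℕ)
        else if i = 1 then (-1 : ℂ) ^ (x₁ : ℕ) else 1))
    (x_b : Fin 2) (hxb : x_b = if b = 1 then x₁ else x₀) :
    (((1 : Matrix (Fin 3) (Fin 3) ℂ) ⊗ₖ U) *ᵥ φ =
      (1 / Real.sqrt 2 : ℂ) •
        fun p => (-1 : ℂ) ^ (x_b : ℕ) * (e b p.1 * e b p.2) + e 2 p.1 * e 2 p.2) ∧
    ∑ p : Fin 3 × Fin 3,
        (starRingEnd ℂ) (φ p) * (((1 : Matrix (Fin 3) (Fin 3) ℂ) ⊗ₖ U) *ᵥ φ) p =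
      if x_b = 0 then 1 else 0 := by
  obtain rfl : e = fun d => Pi.single d 1 := by
    funext d i
    rw [he, Pi.single_apply]
  have hb2 : (b, b) ≠ (2, 2) := by rcases hb with rfl | rfl <;> decide
  have phase :
      (if b = 0 then (-1 : ℂ) ^ (x₀ : ℕ) else if b = 1 then (-1) ^ (x₁ : ℕ) else 1) =
        (-1) ^ (x_b : ℕ) := by
    rcases hb with rfl | rfl <;> simp [hxb]
  simp only [Pi.single_apply_fst_mul_single_apply_snd, mul_one, ← Pi.add_def] at hφ ⊢
  have hψ : ((1 : Matrix (Fin 3) (Fin 3) ℂ) ⊗ₖ U) *ᵥ φ = (1 / Real.sqrt 2 : ℂ) •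
      (Pi.single (b, b) ((-1) ^ (x_b : ℕ)) + Pi.single (2, 2) 1) := by
    rw [hφ, hU, mulVec_smul, mulVec_add, one_kronecker_diagonal_mulVec_single,
      one_kronecker_diagonal_mulVec_single, phase]
    simp
  refine ⟨?_, ?_⟩
  · rw [hψ]
    congr 1
    ext p
    simp [Pi.single_apply]
  · simp only [hψ, starRingEnd_apply]
    rw [hφ, sum_star_smul_single_add_single_mul hb2, star_one_div_sqrt_two_mul_self,
      one_div_mul_eq_div, neg_one_pow_fin_two_add_one_div_two]
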